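/- For any t ∈ ℝ and any finite-dimensional subspace L ⊂ D(A) with dim L = n, the interval [t − F_L^j(t), t + F_L^j(t)] contains at least j points of the spectrum of A counted with multiplicity, i.e. tr 1_{[t−F_L^j(t), t+F_L^j(t)]}(A) ≥ j for all j = 1,…,n. -/

import Mathlib

/-
Let `T = (A - t)|_L`. By Courant–Fischer for `T†T`, the min-max value `F_L^j(t)` is attained:
it equals the `j`-th smallest singular value of `T`, and the span of the corresponding singular
vectors is a `j`-dimensional subspace of `L` on which `‖(A - t)u‖ ≤ F_L^j(t)‖u‖`. Since
`Re⟪x + y, x - y⟫ = ‖x‖² - ‖y‖²`, this says that the quadratic form of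
`(A - (t - F_L^j(t)))(A - (t + F_L^j(t)))` is non-positive on that subspace.
-/

open scoped InnerProductSpace

variable {H : Type*} [NormedAddCommGroup H] [InnerProductSpace ℂ H] [CompleteSpace H]

/-- `Fapp A L j t` : the `j`-th min-max value of `‖(A-t)u‖/‖u‖` over
`j`-dimensional subspaces of `L`. -/
noncomputable def Fapp (A : H →L[ℂ] H) (L : Submodule ℂ H) (j : ℕ) (t : ℝ) : ℝ :=
  sInf {r : ℝ | 0 ≤ r ∧ ∃ V : Submodule ℂ H, V ≤ L ∧ Module.finrank ℂ V = j ∧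
    ∀ u ∈ V, ‖A u - (t : ℂ) • u‖ ≤ r * ‖u‖}

/-- `dd A j t` : the `j`-th min-max value of `‖(A-t)u‖/‖u‖` over all
`j`-dimensional subspaces of the space. -/
noncomputable def dd (A : H →L[ℂ] H) (j : ℕ) (t : ℝ) : ℝ :=
  sInf {r : ℝ | 0 ≤ r ∧ ∃ V : Submodule ℂ H, Module.finrank ℂ V = j ∧
    ∀ u ∈ V, ‖A u - (t : ℂ) • u‖ ≤ r * ‖u‖}

/-- `tr 1_{[a,b]}(A) ≥ j` : there is a `j`-dimensional subspace on which the
quadratic form of `(A-a)(A-b)` is non-positive. -/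
def countGeIcc (A : H →L[ℂ] H) (a b : ℝ) (j : ℕ) : Prop :=
  ∃ V : Submodule ℂ H, Module.finrank ℂ V = j ∧
    ∀ u ∈ V, (inner ℂ (A u - (a : ℂ) • u) (A u - (b : ℂ) • u) : ℂ).re ≤ 0

/-- `tr 1_{(a,b]}(A) ≥ j`. -/
def countGeIoc (A : H →L[ℂ] H) (a b : ℝ) (j : ℕ) : Prop :=
  ∃ V : Submodule ℂ H, Module.finrank ℂ V = j ∧
    (∀ u ∈ V, (inner ℂ (A u - (a : ℂ) • u) (A u - (b : ℂ) • u) : ℂ).re ≤ 0) ∧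
    V ⊓ LinearMap.ker ((A - (a : ℂ) • (1 : H →L[ℂ] H) : H →L[ℂ] H) : H →ₗ[ℂ] H) = ⊥

/-- `tr 1_{[a,b)}(A) ≥ j`. -/
def countGeIco (A : H →L[ℂ] H) (a b : ℝ) (j : ℕ) : Prop :=
  ∃ V : Submodule ℂ H, Module.finrank ℂ V = j ∧
    (∀ u ∈ V, (inner ℂ (A u - (a : ℂ) • u) (A u - (b : ℂ) • u) : ℂ).re ≤ 0) ∧
    V ⊓ LinearMap.ker ((A - (b : ℂ) • (1 : H →L[ℂ] H) : H →L[ℂ] H) : H →ₗ[ℂ] H) = ⊥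

/-- `nminus A j t` : the `j`-th spectral point of `A` to the left of `t`,
counting multiplicities, i.e. `sup {s < t : tr 1_{(s,t]}(A) ≥ j}`. -/
noncomputable def nminus (A : H →L[ℂ] H) (j : ℕ) (t : ℝ) : ℝ :=
  sSup {s : ℝ | s < t ∧ countGeIoc A s t j}

/-- `nplus A j t` : the `j`-th spectral point of `A` to the right of `t`. -/
noncomputable def nplus (A : H →L[ℂ] H) (j : ℕ) (t : ℝ) : ℝ :=
  sInf {s : ℝ | t < s ∧ countGeIco A t s j}

/-- The real spectrum of `A`. -/
def specRe (A : H →L[ℂ] H) : Set ℝ := {x : ℝ | (x : ℂ) ∈ spectrum ℂ A}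

open Module

section

variable {𝕜 E F : Type*} [RCLike 𝕜] [NormedAddCommGroup E] [InnerProductSpace 𝕜 E]
  [NormedAddCommGroup F] [InnerProductSpace 𝕜 F]

theorem re_inner_add_sub_eq_norm_sq_sub_norm_sq (x y : E) :
    RCLike.re ⟪x + y, x - y⟫_𝕜 = ‖x‖ ^ 2 - ‖y‖ ^ 2 := by
  simp only [inner_add_left, inner_sub_right, map_add, map_sub, ← inner_conj_symm y x,
    RCLike.conj_re, inner_self_eq_norm_sq]
  ring

theorem Orthonormal.inner_eq_zero_of_mem_span_image {ι : Type*} {v : ι → E}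
    (hv : Orthonormal 𝕜 v) {s : Set ι} {i : ι} (hi : i ∉ s) {x : E}
    (hx : x ∈ Submodule.span 𝕜 (v '' s)) : ⟪v i, x⟫_𝕜 = 0 := by
  obtain ⟨l, hl, rfl⟩ := (Finsupp.mem_span_image_iff_linearCombination 𝕜).mp hx
  rw [← inner_conj_symm, hv.inner_finsupp_eq_zero hi hl, map_zero]

theorem Orthonormal.finrank_span_image {ι : Type*} {v : ι → E}
    (hv : Orthonormal 𝕜 v) (s : Set ι) [Fintype s] :
    finrank 𝕜 (Submodule.span 𝕜 (v '' s)) = Fintype.card s := by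
  rw [Set.image_eq_range]
  exact finrank_span_eq_card (hv.linearIndependent.comp _ Subtype.val_injective)

namespace LinearMap.IsSymmetric

variable [FiniteDimensional 𝕜 E] {S : E →ₗ[𝕜] E} (hS : S.IsSymmetric) {n : ℕ}
  (hn : finrank 𝕜 E = n)

theorem re_inner_apply_self_eq_sum (v : E) :
    RCLike.re ⟪S v, v⟫_𝕜 =
      ∑ i, hS.eigenvalues hn i * ‖⟪hS.eigenvectorBasis hn i, v⟫_𝕜‖ ^ 2 := by
  rw [← (hS.eigenvectorBasis hn).sum_inner_mul_inner, map_sum]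
  refine Finset.sum_congr rfl fun i _ => ?_
  rw [hS, apply_eigenvectorBasis, inner_smul_right, mul_assoc, ← inner_conj_symm v,
    RCLike.conj_mul, ← RCLike.ofReal_pow, RCLike.re_ofReal_mul, RCLike.ofReal_re]

theorem re_inner_apply_self_le_of_mem_span {s : Set (Fin n)} {c : ℝ}
    (hc : ∀ i ∈ s, hS.eigenvalues hn i ≤ c) {v : E}
    (hv : v ∈ Submodule.span 𝕜 (hS.eigenvectorBasis hn '' s)) :
    RCLike.re ⟪S v, v⟫_𝕜 ≤ c * ‖v‖ ^ 2 := by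
  rw [hS.re_inner_apply_self_eq_sum hn, ← (hS.eigenvectorBasis hn).sum_sq_norm_inner_right,
    Finset.mul_sum]
  refine Finset.sum_le_sum fun i _ => ?_
  by_cases hi : i ∈ s
  · exact mul_le_mul_of_nonneg_right (hc i hi) (sq_nonneg _)
  · simp [(hS.eigenvectorBasis hn).orthonormal.inner_eq_zero_of_mem_span_image hi hv]

theorem le_re_inner_apply_self_of_mem_span {s : Set (Fin n)} {c : ℝ}
    (hc : ∀ i ∈ s, c ≤ hS.eigenvalues hn i) {v : E}
    (hv : v ∈ Submodule.span 𝕜 (hS.eigenvectorBasis hn '' s)) :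
    c * ‖v‖ ^ 2 ≤ RCLike.re ⟪S v, v⟫_𝕜 := by
  rw [hS.re_inner_apply_self_eq_sum hn, ← (hS.eigenvectorBasis hn).sum_sq_norm_inner_right,
    Finset.mul_sum]
  refine Finset.sum_le_sum fun i _ => ?_
  by_cases hi : i ∈ s
  · exact mul_le_mul_of_nonneg_right (hc i hi) (sq_nonneg _)
  · simp [(hS.eigenvectorBasis hn).orthonormal.inner_eq_zero_of_mem_span_image hi hv]

end LinearMap.IsSymmetric

namespace LinearMap

variable [FiniteDimensional 𝕜 E] [FiniteDimensional 𝕜 F] (T : E →ₗ[𝕜] F)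

theorem norm_apply_sq_eq_re_inner_adjoint_comp_self (v : E) :
    ‖T v‖ ^ 2 = RCLike.re ⟪(adjoint T ∘ₗ T) v, v⟫_𝕜 := by
  rw [comp_apply, adjoint_inner_left, inner_self_eq_norm_sq]

theorem exists_finrank_eq_forall_norm_apply_le_singularValues_mul {i : ℕ}
    (hi : i < finrank 𝕜 E) : ∃ V : Submodule 𝕜 E, finrank 𝕜 V = finrank 𝕜 E - i ∧
      ∀ v ∈ V, ‖T v‖ ≤ T.singularValues i * ‖v‖ := by
  have hS := T.isSymmetric_adjoint_comp_self
  set k : Fin (finrank 𝕜 E) := ⟨i, hi⟩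
  refine ⟨Submodule.span 𝕜 (hS.eigenvectorBasis rfl '' Set.Ici k), ?_, fun v hv => ?_⟩
  · simp [(hS.eigenvectorBasis rfl).orthonormal.finrank_span_image, k]
  have hsq : ‖T v‖ ^ 2 ≤ (T.singularValues i * ‖v‖) ^ 2 := by
    rw [mul_pow, T.sq_singularValues_of_lt rfl hi, norm_apply_sq_eq_re_inner_adjoint_comp_self]
    exact hS.re_inner_apply_self_le_of_mem_span rfl
      (fun l hl => hS.eigenvalues_antitone rfl hl) hv
  exact (pow_le_pow_iff_left₀ (norm_nonneg _)
    (mul_nonneg (T.singularValues_nonneg i) (norm_nonneg _)) two_ne_zero).mp hsq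

theorem exists_mem_ne_zero_singularValues_mul_norm_le_norm_apply {i : ℕ}
    (hi : i < finrank 𝕜 E) {V : Submodule 𝕜 E} (hV : finrank 𝕜 E ≤ finrank 𝕜 V + i) :
    ∃ v ∈ V, v ≠ 0 ∧ T.singularValues i * ‖v‖ ≤ ‖T v‖ := by
  have hS := T.isSymmetric_adjoint_comp_self
  set k : Fin (finrank 𝕜 E) := ⟨i, hi⟩
  set W := Submodule.span 𝕜 (hS.eigenvectorBasis rfl '' Set.Iic k)
  have hW : finrank 𝕜 W = i + 1 := by
    simp [W, (hS.eigenvectorBasis rfl).orthonormal.finrank_span_image, k]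
  have hVW : V ⊓ W ≠ ⊥ := by
    rw [Ne, ← Submodule.finrank_eq_zero]
    have := Submodule.finrank_sup_add_finrank_inf_eq V W
    have := Submodule.finrank_le (V ⊔ W)
    omega
  obtain ⟨v, ⟨hvV, hvW⟩, hv0⟩ := Submodule.exists_mem_ne_zero_of_ne_bot hVW
  refine ⟨v, hvV, hv0, ?_⟩
  have hsq : (T.singularValues i * ‖v‖) ^ 2 ≤ ‖T v‖ ^ 2 := by
    rw [mul_pow, T.sq_singularValues_of_lt rfl hi, norm_apply_sq_eq_re_inner_adjoint_comp_self]
    exact hS.le_re_inner_apply_self_of_mem_span rfl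
      (fun l hl => hS.eigenvalues_antitone rfl hl) hvW
  exact (pow_le_pow_iff_left₀ (mul_nonneg (T.singularValues_nonneg i) (norm_nonneg _))
    (norm_nonneg _) two_ne_zero).mp hsq

end LinearMap

end

section

variable {E : Type*} [NormedAddCommGroup E] [InnerProductSpace ℂ E]

theorem countGeIcc_of_forall_norm_sub_smul_le (A : E →L[ℂ] E) (t r : ℝ) {j : ℕ}
    {V : Submodule ℂ E} (hV : finrank ℂ V = j)
    (hr : ∀ u ∈ V, ‖A u - (t : ℂ) • u‖ ≤ r * ‖u‖) :
    countGeIcc A (t - r) (t + r) j := by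
  refine ⟨V, hV, fun u hu => ?_⟩
  have hlhs : A u - ((t - r : ℝ) : ℂ) • u = (A u - (t : ℂ) • u) + (r : ℂ) • u := by
    rw [Complex.ofReal_sub, sub_smul]; abel
  have hrhs : A u - ((t + r : ℝ) : ℂ) • u = (A u - (t : ℂ) • u) - (r : ℂ) • u := by
    rw [Complex.ofReal_add, add_smul]; abel
  rw [hlhs, hrhs, ← RCLike.re_to_complex, re_inner_add_sub_eq_norm_sq_sub_norm_sq, norm_smul,
    Complex.norm_real, Real.norm_eq_abs, mul_pow, sq_abs, ← mul_pow, sub_nonpos]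
  exact pow_le_pow_left₀ (norm_nonneg _) (hr u hu) 2

theorem exists_le_finrank_eq_forall_norm_sub_smul_le_Fapp (A : E →L[ℂ] E) (L : Submodule ℂ E)
    [FiniteDimensional ℂ L] (t : ℝ) {j : ℕ} (hj : 1 ≤ j) (hjL : j ≤ finrank ℂ L) :
    ∃ V : Submodule ℂ E, V ≤ L ∧ finrank ℂ V = j ∧
      ∀ u ∈ V, ‖A u - (t : ℂ) • u‖ ≤ Fapp A L j t * ‖u‖ := by
  set T := (((A : E →ₗ[ℂ] E) - (t : ℂ) • LinearMap.id) ∘ₗ L.subtype).rangeRestrict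
  -- singular values are indexed in decreasing order, so the `j`-th smallest one has index
  -- `finrank L - j`
  set i := finrank ℂ L - j
  set σ := T.singularValues i
  obtain ⟨V, hVdim, hV⟩ :=
    T.exists_finrank_eq_forall_norm_apply_le_singularValues_mul (i := i) (by omega)
  have hVdim' : finrank ℂ (V.map L.subtype) = j := by
    rw [Submodule.finrank_map_subtype_eq]; omega
  have hVσ : ∀ u ∈ V.map L.subtype, ‖A u - (t : ℂ) • u‖ ≤ σ * ‖u‖ := by
    rintro _ ⟨v, hv, rfl⟩
    exact hV v hv
  have hσF : σ ≤ Fapp A L j t := by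
    refine le_csInf
      ⟨σ, T.singularValues_nonneg i, _, Submodule.map_subtype_le L V, hVdim', hVσ⟩ ?_
    rintro r ⟨-, V', hV'L, hV'dim, hV'⟩
    have hdim : finrank ℂ (V'.comap L.subtype) = j :=
      (Submodule.comapSubtypeEquivOfLe hV'L).finrank_eq.trans hV'dim
    obtain ⟨v, hv, hv0, hσv⟩ :=
      T.exists_mem_ne_zero_singularValues_mul_norm_le_norm_apply (i := i)
        (V := V'.comap L.subtype) (by omega) (by omega)
    exact le_of_mul_le_mul_right (hσv.trans (hV' v hv)) (norm_pos_iff.mpr hv0)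
  exact ⟨_, Submodule.map_subtype_le L V, hVdim', fun u hu => (hVσ u hu).trans (by gcongr)⟩

end

theorem stmt_5_general (A : H →L[ℂ] H)
    (L : Submodule ℂ H) [FiniteDimensional ℂ L] (t : ℝ) :
    ∀ j : ℕ, 1 ≤ j → j ≤ Module.finrank ℂ L →
      countGeIcc A (t - Fapp A L j t) (t + Fapp A L j t) j := by
  intro j hj hjL
  obtain ⟨V, -, hVdim, hV⟩ := exists_le_finrank_eq_forall_norm_sub_smul_le_Fapp A L t hj hjL
  exact countGeIcc_of_forall_norm_sub_smul_le A t _ hVdim hV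

/-- `[t - F_L^j(t), t + F_L^j(t)]` contains at least `j` spectral
points of `A`, counting multiplicity: `tr 1_{[t-F_L^j(t),t+F_L^j(t)]}(A) ≥ j`. -/
theorem stmt_5 (A : H →L[ℂ] H) (hA : IsSelfAdjoint A)
    (L : Submodule ℂ H) [FiniteDimensional ℂ L] (t : ℝ) :
    ∀ j : ℕ, 1 ≤ j → j ≤ Module.finrank ℂ L →
      countGeIcc A (t - Fapp A L j t) (t + Fapp A L j t) j :=
  stmt_5_general A L t
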